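/- Let ω : O → I be an n-ary element-wise constant function. Fix k. If for every function f_k : I_k → O_k the reduced function ω^{f_k} (on the remaining n−1 parties) is a process function, then ω itself is a process function. -/
import Mathlib


/-- A process function: for every family of local interventions f_k : I_k → O_k,
the map i ↦ ω(f(i)) has a unique fixed point. -/
def IsProcessFunction {ι : Type*} {O I : ι → Type*}
    (ω : (∀ k, O k) → ∀ k, I k) : Prop :=
  ∀ f : ∀ k, I k → O k, ∃! i : ∀ k, I k, i = ω (fun k => f k (i k))

/-- Extend an assignment on coordinates ≠ k by value b at coordinate k. -/
def extendAtD {n : ℕ} {O : Fin n → Type*} (k : Fin n)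
    (o : ∀ j : {j : Fin n // j ≠ k}, O j.val) (b : O k) : ∀ j, O j :=
  fun i => if h : i = k then (by rw [h]; exact b) else o ⟨i, h⟩

/-- The reduced function ω^{f_k} on the remaining n−1 parties, obtained by wiring party
k's input through f_k to its output (well-defined by element-wise constancy; the k-th
input of ω_k is set arbitrarily to `default`). -/
def reducedD {n : ℕ} {O I : Fin n → Type*} [∀ j, Inhabited (O j)] (k : Fin n)
    (ω : (∀ j, O j) → ∀ j, I j) (f : I k → O k) :
    (∀ j : {j : Fin n // j ≠ k}, O j.val) → ∀ j : {j : Fin n // j ≠ k}, I j.val :=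
  fun o j => ω (extendAtD k o (f (ω (extendAtD k o default) k))) j.val

lemma extendAtD_self {n : ℕ} {O : Fin n → Type*} (k : Fin n)
    (o : ∀ j : {j : Fin n // j ≠ k}, O j.val) (b : O k) :
    extendAtD k o b k = b := by
  simp [extendAtD]

lemma extendAtD_ne {n : ℕ} {O : Fin n → Type*} (k : Fin n)
    (o : ∀ j : {j : Fin n // j ≠ k}, O j.val) (b : O k) (j : Fin n) (h : j ≠ k) :
    extendAtD k o b j = o ⟨j, h⟩ := by
  simp [extendAtD, h]

lemma extendAtD_eq_update {n : ℕ} {O : Fin n → Type*} (k : Fin n)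
    (g : ∀ j, O j) (b : O k) :
    extendAtD k (fun j => g j.val) b = Function.update g k b := by
  funext i
  by_cases h : i = k
  · subst h; rw [extendAtD_self, Function.update_self]
  · rw [extendAtD_ne k _ b i h, Function.update_of_ne h]

/-- If ω is element-wise constant and, for some fixed k, every reduction ω^{f_k} is a
process function, then ω is a process function. -/
theorem stmt9 (n : ℕ) (O I : Fin n → Type*) [∀ j, Inhabited (O j)]
    (ω : (∀ j, O j) → ∀ j, I j)
    (hEW : ∀ (j : Fin n) (o : ∀ i, O i) (b : O j),
      ω o j = ω (Function.update o j b) j)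
    (k : Fin n)
    (hred : ∀ f : I k → O k, IsProcessFunction (reducedD k ω f)) :
    IsProcessFunction ω := by
  intro f
  obtain ⟨i', hi', huniq⟩ := hred (f k) (fun j => f j.val)
  set o' : ∀ j : {j : Fin n // j ≠ k}, O j.val := fun j => f j.val (i' j) with ho'
  set c : I k := ω (extendAtD k o' default) k with hc
  set i : ∀ j, I j := extendAtD (O := I) k i' c with hi
  have hfi : (fun j => f j (i j)) = extendAtD k o' (f k c) := by
    funext j
    by_cases h : j = k
    · subst h; rw [extendAtD_self, hi, extendAtD_self]
    · rw [extendAtD_ne k o' _ j h, hi, ho']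
      simp only [extendAtD_ne k i' c j h]
  have hωk : ∀ b, ω (extendAtD k o' b) k = c := by
    intro b
    rw [hc]
    have := hEW k (extendAtD k o' default) b
    rw [this]
    congr 1
    rw [← extendAtD_eq_update k (extendAtD k o' default) b]
    funext j
    by_cases h : j = k
    · subst h; rw [extendAtD_self, extendAtD_self]
    · rw [extendAtD_ne k o' b j h, extendAtD_ne k _ b j h]
      exact (extendAtD_ne k o' default j h).symm
  refine ⟨i, ?_, ?_⟩
  · funext j
    by_cases h : j = k
    · subst h
      rw [hfi, hωk, hi, extendAtD_self]
    · rw [hfi]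
      have := congrFun hi' ⟨j, h⟩
      rw [hi, extendAtD_ne k i' c j h, this]
      rfl
  · intro y hy
    -- show y = i
    set oy : ∀ j : {j : Fin n // j ≠ k}, O j.val := fun j => f j.val (y j.val) with hoy
    have hAy : ∀ b, extendAtD k oy b = Function.update (fun j => f j (y j)) k b := by
      intro b
      rw [← extendAtD_eq_update]
    have hyk : ω (extendAtD k oy default) k = y k := by
      rw [hAy, ← hEW k, ← hy]
    have hfixy : (fun j : {j : Fin n // j ≠ k} => y j.val)
        = reducedD k ω (f k) (fun j => f j.val (y j.val)) := by
      funext j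
      show y j.val = ω (extendAtD k oy (f k (ω (extendAtD k oy default) k))) j.val
      rw [hyk, hAy, Function.update_eq_self (f := fun j => f j (y j))]
      exact congrFun hy j.val
    have hy' := huniq _ hfixy
    have hoyo : oy = o' := by
      funext j; exact congrArg (f j.val) (congrFun hy' j)
    funext j
    by_cases h : j = k
    · subst h
      rw [hi, extendAtD_self, ← hωk default, ← hoyo, hyk]
    · rw [hi, extendAtD_ne k i' c j h]
      exact congrFun hy' ⟨j, h⟩
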